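/- Suppose G₁ = (V₁, E₁) is a graph whose rigidity matrix R(G₁,p) has rank d|V₁| − binom(d+1,2), and G₂ is a pinned graph with inner vertices I₂, pinned vertex set P₂ ⊆ V₁ with |P₂| ≥ d, edge set E₂ disjoint from E₁, and pinned rigidity matrix R̃(G₂,p) of full rank d|I₂|. Then the rigidity matrix of G = G₁ ∪ G₂ has rank exactly d·|V(G)| − binom(d+1,2), i.e., G is infinitesimally rigid in R^d. -/

import Mathlib

/-- The rigidity matrix of a framework in `ℝ^d`. -/
def rigidityMatrix {V E : Type*} [DecidableEq V] (d : ℕ)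
    (ep : E → V × V) (p : V → Fin d → ℝ) : Matrix E (V × Fin d) ℝ :=
  fun e vk =>
    if vk.1 = (ep e).1 then p (ep e).1 vk.2 - p (ep e).2 vk.2
    else if vk.1 = (ep e).2 then p (ep e).2 vk.2 - p (ep e).1 vk.2
    else 0

/-- The pinned rigidity matrix: columns only for inner vertices (those in `I`). -/
def pinnedRigidityMatrix {V E : Type*} [DecidableEq V] (d : ℕ) (I : Finset V)
    (ep : E → V × V) (p : V → Fin d → ℝ) : Matrix E ({v // v ∈ I} × Fin d) ℝ :=
  fun e vk =>
    if (vk.1 : V) = (ep e).1 then p (ep e).1 vk.2 - p (ep e).2 vk.2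
    else if (vk.1 : V) = (ep e).2 then p (ep e).2 vk.2 - p (ep e).1 vk.2
    else 0

/-!
Argue with kernels (infinitesimal motions) rather than ranks. Extending velocities of the inner
vertices by zero gives a `d|I₂|`-dimensional space of motions of `G₁` which meets the motions of
`G` only in `0`, since the pinned rigidity matrix of `G₂` is injective; hence
`dim ker R(G) + d|I₂| ≤ dim ker R(G₁)`. Conversely the trivial motions `v ↦ S p v + t`, `S` skew,
lie in the kernel of every rigidity matrix, and they form a space of dimension `C(d+1,2)` as soon
as no nonzero vector `c` is orthogonal to all differences `p u - p w`. Here such a `c`, used as a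
constant velocity of the inner vertices, would be a nonzero pinned motion of `G₂`.
-/

open Finset Matrix Module

namespace Matrix

theorem mulVec_extend_zero {m n n' R : Type*} [Fintype n] [Fintype n']
    [NonUnitalNonAssocSemiring R] (A : Matrix m n R) {f : n' → n} (hf : f.Injective)
    (y : n' → R) : A *ᵥ Function.extend f y 0 = A.submatrix _root_.id f *ᵥ y := by
  classical
  ext i
  simp only [mulVec, dotProduct, submatrix_apply, _root_.id]
  rw [← Finset.sum_subset (subset_univ (univ.map ⟨f, hf⟩)), Finset.sum_map]
  · simp [hf.extend_apply]
  · intro b _ hb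
    rw [Function.extend_apply' _ _ _ (by simpa using hb), Pi.zero_apply, mul_zero]

theorem rank_add_finrank_ker {m n K : Type*} [Fintype n] [Field K] (A : Matrix m n K) :
    A.rank + finrank K (LinearMap.ker A.mulVecLin) = Fintype.card n := by
  rw [rank, LinearMap.finrank_range_add_finrank_ker, finrank_fintype_fun_eq_card]

theorem ker_mulVecLin_eq_bot_of_rank_eq {m n K : Type*} [Fintype n] [Field K] {A : Matrix m n K}
    (h : A.rank = Fintype.card n) : LinearMap.ker A.mulVecLin = ⊥ :=
  Submodule.finrank_eq_zero.mp (by have := A.rank_add_finrank_ker; omega)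

theorem dotProduct_mulVec_self_eq_zero {n R : Type*} [Fintype n] [CommRing R]
    [IsAddTorsionFree R] {S : Matrix n n R} (hS : Sᵀ = -S) (v : n → R) : v ⬝ᵥ S *ᵥ v = 0 := by
  refine self_eq_neg.mp ?_
  conv_lhs => rw [dotProduct_mulVec, ← mulVec_transpose, hS, neg_mulVec, neg_dotProduct,
    dotProduct_comm]

end Matrix

noncomputable def skewOfUpper (n : Type*) [LinearOrder n] :
    ({a : n × n // a.1 < a.2} → ℝ) →ₗ[ℝ] Matrix n n ℝ where
  toFun c := Matrix.of fun i j =>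
    if h : i < j then c ⟨(i, j), h⟩ else if h : j < i then -c ⟨(j, i), h⟩ else 0
  map_add' c c' := by
    ext i j
    simp only [Matrix.add_apply, of_apply, Pi.add_apply]
    split_ifs <;> ring
  map_smul' r c := by
    ext i j
    simp only [Matrix.smul_apply, of_apply, Pi.smul_apply, smul_eq_mul, RingHom.id_apply]
    split_ifs <;> ring

section SkewOfUpper

variable {n : Type*} [LinearOrder n]

theorem skewOfUpper_transpose (c : {a : n × n // a.1 < a.2} → ℝ) :
    (skewOfUpper n c)ᵀ = -skewOfUpper n c := by
  ext i j
  simp only [skewOfUpper, LinearMap.coe_mk, AddHom.coe_mk, transpose_apply, of_apply]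
  rcases lt_trichotomy i j with h | rfl | h
  · simp [h, h.not_gt]
  · simp
  · simp [h, h.not_gt]

theorem skewOfUpper_injective : Function.Injective (skewOfUpper n) := by
  intro c c' h
  ext ⟨⟨i, j⟩, hij⟩
  simpa [skewOfUpper, hij] using congrFun₂ h i j

end SkewOfUpper

section Rigidity

variable {V E : Type*} {d : ℕ}

variable (d) in
noncomputable def innerExtension (I : Finset V) :
    ({v // v ∈ I} × Fin d → ℝ) →ₗ[ℝ] V × Fin d → ℝ :=
  Function.ExtendByZero.linearMap ℝ (Prod.map Subtype.val _root_.id)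

theorem innerExtension_injective (I : Finset V) : Function.Injective (innerExtension d I) :=
  Function.extend_injective (Subtype.val_injective.prodMap Function.injective_id)
    (0 : V × Fin d → ℝ)

variable [DecidableEq V] (ep : E → V × V) (p : V → Fin d → ℝ)

theorem curry_innerExtension {I : Finset V} (y : {v // v ∈ I} × Fin d → ℝ) (v : V) :
    Function.curry (innerExtension d I y) v =
      if h : v ∈ I then fun k => y (⟨v, h⟩, k) else 0 := by
  ext k
  split_ifs with h
  · exact (Subtype.val_injective.prodMap Function.injective_id).extend_apply y 0 (⟨v, h⟩, k)
  · exact Function.extend_apply' _ _ _ (by rintro ⟨⟨⟨w, hw⟩, l⟩, hwl⟩; cases hwl; exact h hw)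

theorem rigidityMatrix_apply (e : E) (v : V) (k : Fin d) :
    rigidityMatrix d ep p e (v, k) =
      (if v = (ep e).1 then (p (ep e).1 - p (ep e).2) k else 0) -
        (if v = (ep e).2 then (p (ep e).1 - p (ep e).2) k else 0) := by
  unfold rigidityMatrix
  split_ifs <;> simp_all

theorem pinnedRigidityMatrix_eq_zero {I : Finset V} (h : ∀ e, (ep e).1 ∉ I ∧ (ep e).2 ∉ I) :
    pinnedRigidityMatrix d I ep p = 0 := by
  ext e ⟨⟨v, hv⟩, k⟩
  simp [pinnedRigidityMatrix, ne_of_mem_of_not_mem hv (h e).1, ne_of_mem_of_not_mem hv (h e).2]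

variable [Fintype V]

theorem rigidityMatrix_mulVec_apply (x : V × Fin d → ℝ) (e : E) :
    (rigidityMatrix d ep p *ᵥ x) e =
      (p (ep e).1 - p (ep e).2) ⬝ᵥ (Function.curry x (ep e).1 - Function.curry x (ep e).2) := by
  simp only [mulVec, dotProduct, Fintype.sum_prod_type, rigidityMatrix_apply, sub_mul, ite_mul,
    zero_mul, Finset.sum_sub_distrib]
  rw [Finset.sum_comm]
  simp [Finset.sum_sub_distrib, mul_sub]

theorem ker_rigidityMatrix_sumElim {E₁ E₂ : Type*} (ep₁ : E₁ → V × V) (ep₂ : E₂ → V × V) :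
    LinearMap.ker (rigidityMatrix d (Sum.elim ep₁ ep₂) p).mulVecLin =
      LinearMap.ker (rigidityMatrix d ep₁ p).mulVecLin ⊓
        LinearMap.ker (rigidityMatrix d ep₂ p).mulVecLin := by
  ext x
  simp only [Submodule.mem_inf, LinearMap.mem_ker, mulVecLin_apply, funext_iff, Sum.forall]
  rfl

theorem rigidityMatrix_mulVec_innerExtension (I : Finset V) (y : {v // v ∈ I} × Fin d → ℝ) :
    rigidityMatrix d ep p *ᵥ innerExtension d I y = pinnedRigidityMatrix d I ep p *ᵥ y :=
  -- the pinned rigidity matrix is definitionally the submatrix on the inner-vertex columns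
  mulVec_extend_zero _ (Subtype.val_injective.prodMap Function.injective_id) y

theorem eq_zero_of_forall_sub_dotProduct_eq_zero {I : Finset V} (hI : I.Nonempty)
    (hB : LinearMap.ker (pinnedRigidityMatrix d I ep p).mulVecLin = ⊥) {c : Fin d → ℝ}
    (hc : ∀ u w, (p u - p w) ⬝ᵥ c = 0) : c = 0 := by
  have hy : (fun ik : {v // v ∈ I} × Fin d => c ik.2) = 0 := by
    refine ker_mulVecLin_eq_bot_iff.mp hB _ (funext fun e => ?_)
    rw [← rigidityMatrix_mulVec_innerExtension, rigidityMatrix_mulVec_apply, curry_innerExtension,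
      curry_innerExtension]
    split_ifs <;> simp [hc]
  obtain ⟨v, hv⟩ := hI
  exact funext fun k => congrFun hy (⟨v, hv⟩, k)

end Rigidity

section TrivialMotion

variable {V E : Type*} {d : ℕ}

noncomputable def trivialMotion (p : V → Fin d → ℝ) :
    (Matrix (Fin d) (Fin d) ℝ × (Fin d → ℝ)) →ₗ[ℝ] V × Fin d → ℝ where
  toFun St := Function.uncurry fun v => St.1 *ᵥ p v + St.2
  map_add' St St' := by
    ext ⟨v, k⟩
    simp only [Prod.fst_add, Prod.snd_add, add_mulVec, Function.uncurry_apply_pair, Pi.add_apply]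
    ring
  map_smul' r St := by
    ext ⟨v, k⟩
    simp [smul_mulVec, mul_add]

theorem curry_trivialMotion (p : V → Fin d → ℝ) (S : Matrix (Fin d) (Fin d) ℝ) (t : Fin d → ℝ)
    (v : V) : Function.curry (trivialMotion p (S, t)) v = S *ᵥ p v + t :=
  rfl

theorem trivialMotion_mem_ker [Fintype V] [DecidableEq V] (ep : E → V × V) (p : V → Fin d → ℝ)
    {S : Matrix (Fin d) (Fin d) ℝ} (hS : Sᵀ = -S) (t : Fin d → ℝ) :
    trivialMotion p (S, t) ∈ LinearMap.ker (rigidityMatrix d ep p).mulVecLin := by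
  ext e
  rw [mulVecLin_apply, rigidityMatrix_mulVec_apply, curry_trivialMotion, curry_trivialMotion,
    add_sub_add_right_eq_sub, ← mulVec_sub, Pi.zero_apply, dotProduct_mulVec_self_eq_zero hS]

theorem trivialMotion_injective [Nonempty V] {p : V → Fin d → ℝ}
    (hspan : ∀ c : Fin d → ℝ, (∀ u w, (p u - p w) ⬝ᵥ c = 0) → c = 0) :
    Function.Injective (trivialMotion p) := by
  rw [← LinearMap.ker_eq_bot, LinearMap.ker_eq_bot']
  rintro ⟨S, t⟩ h
  have hv : ∀ v, S *ᵥ p v + t = 0 := fun v => funext fun k => congrFun h (v, k)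
  have hS : S = 0 := by
    ext k l
    refine congrFun (hspan (S k) fun u w => ?_) l
    have : S *ᵥ (p u - p w) = 0 := by
      rw [mulVec_sub, ← add_sub_add_right_eq_sub _ _ t, hv, hv, sub_zero]
    rw [dotProduct_comm]
    exact congrFun this k
  obtain ⟨v⟩ := ‹Nonempty V›
  have ht : t = 0 := by simpa [hS] using hv v
  simp [hS, ht]

theorem choose_two_le_finrank_ker_rigidityMatrix [Fintype V] [DecidableEq V] [Nonempty V]
    (ep : E → V × V) {p : V → Fin d → ℝ}
    (hspan : ∀ c : Fin d → ℝ, (∀ u w, (p u - p w) ⬝ᵥ c = 0) → c = 0) :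
    (d + 1).choose 2 ≤ finrank ℝ (LinearMap.ker (rigidityMatrix d ep p).mulVecLin) := by
  let Φ := trivialMotion p ∘ₗ (skewOfUpper (Fin d)).prodMap LinearMap.id
  have hΦ : ∀ x, Φ x ∈ LinearMap.ker (rigidityMatrix d ep p).mulVecLin := fun ⟨c, t⟩ =>
    trivialMotion_mem_ker ep p (skewOfUpper_transpose c) t
  have hinj : Function.Injective Φ :=
    (trivialMotion_injective hspan).comp (skewOfUpper_injective.prodMap Function.injective_id)
  have hdim : finrank ℝ (({a : Fin d × Fin d // a.1 < a.2} → ℝ) × (Fin d → ℝ)) =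
      (d + 1).choose 2 := by
    rw [finrank_prod, finrank_fintype_fun_eq_card, finrank_fintype_fun_eq_card,
      Fintype.card_subtype, Fintype.card_product_filter_lt, Fintype.card_fin,
      Nat.choose_succ_succ' d 1, Nat.choose_one_right, add_comm]
  rw [← hdim]
  exact LinearMap.finrank_le_finrank_of_injective (f := Φ.codRestrict _ hΦ)
    fun x y hxy => hinj (congrArg Subtype.val hxy)

end TrivialMotion

theorem finrank_ker_rigidityMatrix_sumElim_add_le {V E₁ E₂ : Type*} [Fintype V] [DecidableEq V]
    {d : ℕ} {p : V → Fin d → ℝ} {ep₁ : E₁ → V × V} {ep₂ : E₂ → V × V} {I : Finset V}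
    (h₁ : ∀ e, (ep₁ e).1 ∉ I ∧ (ep₁ e).2 ∉ I)
    (h₂ : LinearMap.ker (pinnedRigidityMatrix d I ep₂ p).mulVecLin = ⊥) :
    finrank ℝ (LinearMap.ker (rigidityMatrix d (Sum.elim ep₁ ep₂) p).mulVecLin) + I.card * d ≤
      finrank ℝ (LinearMap.ker (rigidityMatrix d ep₁ p).mulVecLin) := by
  rw [ker_rigidityMatrix_sumElim]
  set K₁ := LinearMap.ker (rigidityMatrix d ep₁ p).mulVecLin
  set K := K₁ ⊓ LinearMap.ker (rigidityMatrix d ep₂ p).mulVecLin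
  set ι := innerExtension d I
  have hι : finrank ℝ (LinearMap.range ι) = I.card * d := by
    rw [LinearMap.finrank_range_of_inj (innerExtension_injective I), finrank_fintype_fun_eq_card]
    simp
  have hιK₁ : LinearMap.range ι ≤ K₁ := by
    rintro _ ⟨y, rfl⟩
    rw [LinearMap.mem_ker, mulVecLin_apply, rigidityMatrix_mulVec_innerExtension,
      pinnedRigidityMatrix_eq_zero ep₁ p h₁, zero_mulVec]
  have hιK : K ⊓ LinearMap.range ι = ⊥ := by
    rw [eq_bot_iff]
    intro x hx
    obtain ⟨⟨-, hy⟩, hxι⟩ := Submodule.mem_inf.mp hx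
    obtain ⟨y, rfl⟩ := LinearMap.mem_range.mp hxι
    rw [SetLike.mem_coe, LinearMap.mem_ker, mulVecLin_apply,
      rigidityMatrix_mulVec_innerExtension] at hy
    rw [ker_mulVecLin_eq_bot_iff.mp h₂ y hy, map_zero]
    exact zero_mem _
  calc finrank ℝ K + I.card * d = finrank ℝ ↥(K ⊔ LinearMap.range ι) := by
        rw [← hι, ← Submodule.finrank_sup_add_finrank_inf_eq, hιK, finrank_bot, add_zero]
    _ ≤ finrank ℝ K₁ := Submodule.finrank_mono (sup_le inf_le_left hιK₁)

theorem rank_union_of_rigid_and_pinnedRigid_general {V E₁ E₂ : Type*}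
    [Fintype V] [DecidableEq V]
    (d : ℕ) (V₁ I₂ P₂ : Finset V)
    (hcover : V₁ ∪ I₂ = Finset.univ) (hdisj : Disjoint V₁ I₂)
    (ep₁ : E₁ → V × V) (hep₁ : ∀ e, (ep₁ e).1 ∈ V₁ ∧ (ep₁ e).2 ∈ V₁)
    (ep₂ : E₂ → V × V)
    (hep₂ : ∀ e, (ep₂ e).1 ∈ I₂ ∧ ((ep₂ e).2 ∈ I₂ ∨ (ep₂ e).2 ∈ P₂))
    (p : V → Fin d → ℝ)
    (hr₁ : (rigidityMatrix d ep₁ p).rank = d * V₁.card - (d + 1).choose 2)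
    (hr₂ : (pinnedRigidityMatrix d I₂ ep₂ p).rank = d * I₂.card) :
    (rigidityMatrix d (Sum.elim ep₁ ep₂) p).rank =
      d * Fintype.card V - (d + 1).choose 2 := by
  have hcard : Fintype.card V = V₁.card + I₂.card := by
    rw [← card_union_of_disjoint hdisj, hcover, card_univ]
  have hM := (rigidityMatrix d (Sum.elim ep₁ ep₂) p).rank_add_finrank_ker
  have hR₁ := (rigidityMatrix d ep₁ p).rank_add_finrank_ker
  simp only [Fintype.card_prod, Fintype.card_fin, hcard, add_mul] at hM hR₁
  rw [hcard, mul_comm d, add_mul]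
  rw [mul_comm d] at hr₁
  obtain rfl | hI := I₂.eq_empty_or_nonempty
  · have : IsEmpty E₂ := ⟨fun e => by simpa using (hep₂ e).1⟩
    have hK₂ : LinearMap.ker (rigidityMatrix d ep₂ p).mulVecLin = ⊤ :=
      LinearMap.ker_eq_top.mpr (Subsingleton.elim _ _)
    rw [ker_rigidityMatrix_sumElim, hK₂, inf_top_eq] at hM
    simp only [card_empty, zero_mul, add_zero] at hM hR₁ ⊢
    omega
  · have hB := ker_mulVecLin_eq_bot_of_rank_eq (by rw [hr₂]; simp [mul_comm])
    have hglue := finrank_ker_rigidityMatrix_sumElim_add_le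
      (fun e => ⟨disjoint_left.mp hdisj (hep₁ e).1, disjoint_left.mp hdisj (hep₁ e).2⟩) hB
    have : Nonempty V := hI.to_type
    have htriv := choose_two_le_finrank_ker_rigidityMatrix (Sum.elim ep₁ ep₂)
      fun c => eq_zero_of_forall_sub_dotProduct_eq_zero ep₂ p hI hB
    -- `htriv` and `hglue` force `rank R(G₁) + C(d+1,2) ≤ d|V₁|`, so the truncated
    -- subtraction in `hr₁` is exact
    omega

/-- Gluing a rigid graph `G₁` on vertex set `V₁` to a pinned rigid graph `G₂`
with inner vertices `I₂` and pinned vertices `P₂ ⊆ V₁`, `|P₂| ≥ d`, with edge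
sets disjoint: the union is infinitesimally rigid in `ℝ^d`, i.e. its rigidity
matrix has rank exactly `d|V(G)| - C(d+1,2)`. -/
theorem rank_union_of_rigid_and_pinnedRigid {V E₁ E₂ : Type*}
    [Fintype V] [DecidableEq V] [Fintype E₁] [Fintype E₂]
    (d : ℕ) (V₁ I₂ P₂ : Finset V)
    (hcover : V₁ ∪ I₂ = Finset.univ) (hdisj : Disjoint V₁ I₂)
    (hP : P₂ ⊆ V₁) (hPd : d ≤ P₂.card)
    (ep₁ : E₁ → V × V) (hep₁ : ∀ e, (ep₁ e).1 ∈ V₁ ∧ (ep₁ e).2 ∈ V₁)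
    (ep₂ : E₂ → V × V)
    (hep₂ : ∀ e, (ep₂ e).1 ∈ I₂ ∧ ((ep₂ e).2 ∈ I₂ ∨ (ep₂ e).2 ∈ P₂))
    (p : V → Fin d → ℝ)
    (hr₁ : (rigidityMatrix d ep₁ p).rank = d * V₁.card - (d + 1).choose 2)
    (hr₂ : (pinnedRigidityMatrix d I₂ ep₂ p).rank = d * I₂.card) :
    (rigidityMatrix d (Sum.elim ep₁ ep₂) p).rank =
      d * Fintype.card V - (d + 1).choose 2 :=
  rank_union_of_rigid_and_pinnedRigid_general d V₁ I₂ P₂ hcover hdisj ep₁ hep₁ ep₂ hep₂ p hr₁ hr₂
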